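/- Suppose the trace-inclusion property trace(wTS'_i) ⊆ trace(wTS_i) holds for all i = 1,...,N, and suppose the product ⊗_i wTS'_i generates a path τ with trace(τ) ∈ Words(φ). Then trace(⊗_i wTS_i) ∩ Words(φ) ≠ ∅, i.e., any plan found on the reduced systems certifies feasibility of φ on the original systems. -/

import Mathlib

/-! A path of the product is nothing but a tuple of component paths, and its trace is the
pointwise union of the component traces. Hence the product trace set depends only on the
component trace sets, monotonically, and a word certified on the reduced product is already
a trace of the original product. -/

/-- The trace set of the product of the transition systems induced on the state
subsets `R i` with transitions `tr i` (labeling L(q) = ⋃ᵢ Lᵢ(qᵢ)). -/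
def prodTrace {N : ℕ} {S : Fin N → Type*} {AP : Type*}
    (q0 : ∀ i, S i) (R : ∀ i, Set (S i)) (tr : ∀ i, S i → S i → Prop)
    (L : ∀ i, S i → Set AP) : Set (ℕ → Set AP) :=
  {σ | ∃ τ : ℕ → (∀ i, S i), (∀ i, τ 0 i = q0 i) ∧
      (∀ k i, τ k i ∈ R i) ∧ (∀ k i, tr i (τ k i) (τ (k + 1) i)) ∧
      σ = fun k => ⋃ i, L i (τ k i)}

def traces {S AP : Type*} (q0 : S) (R : Set S) (tr : S → S → Prop) (L : S → Set AP) :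
    Set (ℕ → Set AP) :=
  {σ | ∃ τ : ℕ → S, τ 0 = q0 ∧ (∀ k, τ k ∈ R) ∧ (∀ k, tr (τ k) (τ (k + 1))) ∧
    σ = fun k => L (τ k)}

section

variable {N : ℕ} {S : Fin N → Type*} {AP : Type*} {q0 : ∀ i, S i} {L : ∀ i, S i → Set AP}

theorem mem_prodTrace_iff {R : ∀ i, Set (S i)} {tr : ∀ i, S i → S i → Prop}
    {σ : ℕ → Set AP} :
    σ ∈ prodTrace q0 R tr L ↔ ∃ σs : Fin N → ℕ → Set AP,
      (∀ i, σs i ∈ traces (q0 i) (R i) (tr i) (L i)) ∧ σ = fun k => ⋃ i, σs i k := by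
  constructor
  · rintro ⟨τ, h0, hR, htr, rfl⟩
    exact ⟨fun i k => L i (τ k i),
      fun i => ⟨fun k => τ k i, h0 i, fun k => hR k i, fun k => htr k i, rfl⟩, rfl⟩
  · rintro ⟨σs, hσs, rfl⟩
    choose τs h0 hR htr hL using hσs
    refine ⟨fun k i => τs i k, h0, fun k i => hR i k, fun k i => htr i k, ?_⟩
    simp only [hL]

theorem prodTrace_mono {R R' : ∀ i, Set (S i)} {tr tr' : ∀ i, S i → S i → Prop}
    (h : ∀ i, traces (q0 i) (R i) (tr i) (L i) ⊆ traces (q0 i) (R' i) (tr' i) (L i)) :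
    prodTrace q0 R tr L ⊆ prodTrace q0 R' tr' L := by
  intro σ hσ
  rw [mem_prodTrace_iff] at hσ ⊢
  obtain ⟨σs, hσs, rfl⟩ := hσ
  exact ⟨σs, fun i => h i (hσs i), rfl⟩

end

theorem reduced_plan_certifies_feasibility_general
    {N : ℕ} {S : Fin N → Type*} {AP : Type*}
    (q0 : ∀ i, S i) (Q Q' : ∀ i, Set (S i))
    (tr tr' : ∀ i, S i → S i → Prop) (L : ∀ i, S i → Set AP)
    (Words : Set (ℕ → Set AP))
    (htraceIncl : ∀ i,
      {σ : ℕ → Set AP | ∃ τ : ℕ → S i, τ 0 = q0 i ∧ (∀ k, τ k ∈ Q' i) ∧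
          (∀ k, tr' i (τ k) (τ (k + 1))) ∧ σ = fun k => L i (τ k)} ⊆
      {σ : ℕ → Set AP | ∃ τ : ℕ → S i, τ 0 = q0 i ∧ (∀ k, τ k ∈ Q i) ∧
          (∀ k, tr i (τ k) (τ (k + 1))) ∧ σ = fun k => L i (τ k)})
    (hplan : ∃ σ ∈ prodTrace q0 Q' tr' L, σ ∈ Words) :
    (prodTrace q0 Q tr L ∩ Words).Nonempty := by
  obtain ⟨σ, hσ, hW⟩ := hplan
  exact ⟨σ, prodTrace_mono htraceIncl hσ, hW⟩

/-- Suppose each wTS'ᵢ is a sub-transition-system of wTSᵢ (so in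
particular trace(wTS'ᵢ) ⊆ trace(wTSᵢ)), and the product ⊗ᵢ wTS'ᵢ generates a path
τ whose trace lies in Words(φ).  Then trace(⊗ᵢ wTSᵢ) ∩ Words(φ) ≠ ∅: any plan
found on the reduced systems certifies feasibility of φ on the originals. -/
theorem reduced_plan_certifies_feasibility
    {N : ℕ} {S : Fin N → Type*} {AP : Type*}
    (q0 : ∀ i, S i) (Q Q' : ∀ i, Set (S i))
    (tr tr' : ∀ i, S i → S i → Prop) (L : ∀ i, S i → Set AP)
    (Words : Set (ℕ → Set AP))
    (hQ : ∀ i, Q' i ⊆ Q i)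
    (htr : ∀ i a b, tr' i a b → tr i a b)
    (htraceIncl : ∀ i,
      {σ : ℕ → Set AP | ∃ τ : ℕ → S i, τ 0 = q0 i ∧ (∀ k, τ k ∈ Q' i) ∧
          (∀ k, tr' i (τ k) (τ (k + 1))) ∧ σ = fun k => L i (τ k)} ⊆
      {σ : ℕ → Set AP | ∃ τ : ℕ → S i, τ 0 = q0 i ∧ (∀ k, τ k ∈ Q i) ∧
          (∀ k, tr i (τ k) (τ (k + 1))) ∧ σ = fun k => L i (τ k)})
    (hplan : ∃ σ ∈ prodTrace q0 Q' tr' L, σ ∈ Words) :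
    (prodTrace q0 Q tr L ∩ Words).Nonempty :=
  reduced_plan_certifies_feasibility_general q0 Q Q' tr tr' L Words htraceIncl hplan
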